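/- Optimality of recursive hit set pruning: the hit set S* returned by the top-down Recall algorithm minimizes |S| over all sets S of non-placeholder nodes satisfying (i) [Ts, Te) is the disjoint union of [Ts, Te) ∩ [σ_v, τ_v) over v ∈ S, and (ii) |[Ts, Te) ∩ [σ_v, τ_v)| ≥ θ·|[σ_v, τ_v)| for all v ∈ S. -/
import Mathlib


inductive SegTree : ℕ → ℕ → Type
  | leaf (t : ℕ) : SegTree t (t + 1)
  | node {a m b : ℕ} (l : SegTree a m) (r : SegTree m b) : SegTree a b

/-- The set of intervals of the nodes of the tree. -/
def SegTree.intervals : ∀ {a b : ℕ}, SegTree a b → Finset (ℕ × ℕ)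
  | _, _, .leaf t => {(t, t + 1)}
  | a, b, .node l r => insert (a, b) (l.intervals ∪ r.intervals)

open scoped Classical in
/-- The Recall algorithm: at a node v with interval [a, b), if
|[Ts,Te) ∩ [a,b)| ≥ θ·|[a,b)| then return {v}; otherwise recurse into whichever
children's intervals intersect the query and union the results. -/
noncomputable def SegTree.recall (θ : ℝ) (Ts Te : ℕ) :
    ∀ {a b : ℕ}, SegTree a b → Finset (ℕ × ℕ)
  | _, _, .leaf t => {(t, t + 1)}
  | a, b, @SegTree.node _ m _ l r =>
      if θ * ((b : ℝ) - (a : ℝ)) ≤ ((min Te b - max Ts a : ℕ) : ℝ) then {(a, b)}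
      else if Te ≤ m then SegTree.recall θ Ts Te l
      else if m ≤ Ts then SegTree.recall θ Ts Te r
      else SegTree.recall θ Ts Te l ∪ SegTree.recall θ Ts Te r

/-- A valid (pruned) hit set `S` for the query `[Ts, Te)` with threshold `θ`:
(i) the nodes' query intersections are pairwise disjoint and their disjoint
union is [Ts, Te); (ii) every node's query intersection has length at least a
θ fraction of the node's interval length. -/
def SegTree.ValidHit {a b : ℕ} (t : SegTree a b) (θ : ℝ) (Ts Te : ℕ)
    (S : Finset (ℕ × ℕ)) : Prop :=
  (∀ I ∈ S, I ∈ t.intervals) ∧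
  (∀ I ∈ S, ∀ J ∈ S, I ≠ J →
    Disjoint (Finset.Ico (max Ts I.1) (min Te I.2))
      (Finset.Ico (max Ts J.1) (min Te J.2))) ∧
  (S.biUnion fun I => Finset.Ico (max Ts I.1) (min Te I.2)) = Finset.Ico Ts Te ∧
  (∀ I ∈ S, θ * ((I.2 : ℝ) - (I.1 : ℝ)) ≤ ((min Te I.2 - max Ts I.1 : ℕ) : ℝ))

/-!
STATEMENT 13: Optimality of recursive hit set pruning: the hit set S* returned
by the top-down Recall algorithm minimizes |S| over all sets S of
(non-placeholder) nodes satisfying (i) [Ts, Te) is the disjoint union of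
[Ts, Te) ∩ [σ_v, τ_v) over v ∈ S, and (ii) |[Ts,Te) ∩ [σ_v,τ_v)| ≥ θ·|[σ_v,τ_v)|
for all v ∈ S.  (A leaf reached by the recursion always satisfies the threshold
condition since θ < 1, so it is returned directly.)
-/

lemma SegTree.lt {a b : ℕ} (t : SegTree a b) : a < b := by
  induction t with
  | leaf t => omega
  | node l r ihl ihr => omega

lemma SegTree.mem_intervals {a b : ℕ} (t : SegTree a b) {p : ℕ × ℕ}
    (hp : p ∈ t.intervals) : a ≤ p.1 ∧ p.1 < p.2 ∧ p.2 ≤ b := by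
  induction t with
  | leaf t =>
    simp only [SegTree.intervals, Finset.mem_singleton] at hp
    subst hp; simp
  | node l r ihl ihr =>
    simp only [SegTree.intervals, Finset.mem_insert, Finset.mem_union] at hp
    rcases hp with h | h | h
    · subst h; exact ⟨le_refl _, lt_trans l.lt r.lt, le_refl _⟩
    · obtain ⟨h1, h2, h3⟩ := ihl h
      exact ⟨h1, h2, le_trans h3 r.lt.le⟩
    · obtain ⟨h1, h2, h3⟩ := ihr h
      exact ⟨le_trans l.lt.le h1, h2, h3⟩

/-- Clipped validity: like `ValidHit`, but the covering target is the query
clipped to the node's interval. -/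
def SegTree.CV {a b : ℕ} (t : SegTree a b) (θ : ℝ) (Ts Te : ℕ)
    (S : Finset (ℕ × ℕ)) : Prop :=
  (∀ I ∈ S, I ∈ t.intervals) ∧
  (∀ I ∈ S, ∀ J ∈ S, I ≠ J →
    Disjoint (Finset.Ico (max Ts I.1) (min Te I.2))
      (Finset.Ico (max Ts J.1) (min Te J.2))) ∧
  (S.biUnion fun I => Finset.Ico (max Ts I.1) (min Te I.2))
      = Finset.Ico (max Ts a) (min Te b) ∧
  (∀ I ∈ S, θ * ((I.2 : ℝ) - (I.1 : ℝ)) ≤ ((min Te I.2 - max Ts I.1 : ℕ) : ℝ))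

lemma piece_pos {θ : ℝ} (hθ0 : 0 < θ) {Ts Te : ℕ} (I : ℕ × ℕ) (h12 : I.1 < I.2)
    (hthr : θ * ((I.2 : ℝ) - (I.1 : ℝ)) ≤ ((min Te I.2 - max Ts I.1 : ℕ) : ℝ)) :
    max Ts I.1 < min Te I.2 := by
  by_contra hc
  push_neg at hc
  rw [Nat.sub_eq_zero_of_le hc] at hthr
  have : (I.1 : ℝ) < I.2 := by exact_mod_cast h12
  simp at hthr
  nlinarith

lemma main_lemma {θ : ℝ} (hθ0 : 0 < θ) (hθ1 : θ < 1) (Ts Te : ℕ) :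
    ∀ {a b : ℕ} (t : SegTree a b), max Ts a < min Te b →
      t.CV θ Ts Te (t.recall θ Ts Te) ∧
      ∀ S : Finset (ℕ × ℕ), t.CV θ Ts Te S →
        (t.recall θ Ts Te).card ≤ S.card := by
  intro a b t
  induction t with
  | leaf n =>
    intro h
    have hTs : Ts ≤ n := by omega
    have hTe : n + 1 ≤ Te := by omega
    have hmax : max Ts n = n := by omega
    have hmin : min Te (n + 1) = n + 1 := by omega
    constructor
    · refine ⟨?_, ?_, ?_, ?_⟩
      · intro I hI
        simpa [SegTree.recall, SegTree.intervals] using hI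
      · intro I hI J hJ hne
        simp [SegTree.recall] at hI hJ
        exact absurd (hI.trans hJ.symm) hne
      · simp [SegTree.recall, Finset.singleton_biUnion]
      · intro I hI
        simp [SegTree.recall] at hI
        subst hI
        simp only [hmax, hmin]
        push_cast
        simp
        linarith
    · intro S hS
      obtain ⟨_, _, hcov, _⟩ := hS
      have hne : S.Nonempty := by
        rcases S.eq_empty_or_nonempty with rfl | h'
        · have := Finset.nonempty_Ico.mpr h
          rw [← hcov] at this
          simp at this
        · exact h'
      have : 1 ≤ S.card := Finset.Nonempty.card_pos hne
      simpa [SegTree.recall] using this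
  | node l r ihl ihr =>
    rename_i a m b
    intro h
    have hma : a < m := l.lt
    have hmb : m < b := r.lt
    by_cases hA : θ * ((b : ℝ) - (a : ℝ)) ≤ ((min Te b - max Ts a : ℕ) : ℝ)
    · rw [SegTree.recall, if_pos hA]
      constructor
      · refine ⟨?_, ?_, ?_, ?_⟩
        · intro I hI
          simp at hI; subst hI
          simp [SegTree.intervals]
        · intro I hI J hJ hne
          simp at hI hJ
          exact absurd (hI.trans hJ.symm) hne
        · simp [Finset.singleton_biUnion]
        · intro I hI
          simp at hI; subst hI
          exact hA
      · intro S hS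
        obtain ⟨_, _, hcov, _⟩ := hS
        have hne : S.Nonempty := by
          rcases S.eq_empty_or_nonempty with rfl | h'
          · have := Finset.nonempty_Ico.mpr h
            rw [← hcov] at this
            simp at this
          · exact h'
        simpa using Finset.Nonempty.card_pos hne
    · -- For any valid S, members are in the children's intervals
      have hchild : ∀ S : Finset (ℕ × ℕ), (SegTree.node l r).CV θ Ts Te S →
          ∀ I ∈ S, I ∈ l.intervals ∨ I ∈ r.intervals := by
        intro S hS I hI
        obtain ⟨hmem, _, _, hthr⟩ := hS
        have hI' := hmem I hI
        simp only [SegTree.intervals, Finset.mem_insert, Finset.mem_union] at hI'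
        rcases hI' with h1 | h1 | h1
        · exfalso
          apply hA
          have := hthr I hI
          rw [h1] at this
          exact this
        · exact Or.inl h1
        · exact Or.inr h1
      by_cases hTem : Te ≤ m
      · rw [SegTree.recall, if_neg hA, if_pos hTem]
        have hminm : min Te m = min Te b := by omega
        have h' : max Ts a < min Te m := by omega
        obtain ⟨⟨lmem, ldisj, lcov, lthr⟩, lopt⟩ := ihl h'
        constructor
        · refine ⟨?_, ldisj, ?_, lthr⟩
          · intro I hI
            simp only [SegTree.intervals, Finset.mem_insert, Finset.mem_union]
            exact Or.inr (Or.inl (lmem I hI))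
          · rw [lcov, hminm]
        · intro S hS
          obtain ⟨hmem, hdisj, hcov, hthr⟩ := hS
          have hSl : ∀ I ∈ S, I ∈ l.intervals := by
            intro I hI
            rcases hchild S ⟨hmem, hdisj, hcov, hthr⟩ I hI with h1 | h1
            · exact h1
            · exfalso
              obtain ⟨hb1, hb2, hb3⟩ := r.mem_intervals h1
              have hp := piece_pos hθ0 I hb2 (hthr I hI)
              omega
          exact lopt S ⟨hSl, hdisj, by rw [hcov, hminm], hthr⟩
      · by_cases hTsm : m ≤ Ts
        · rw [SegTree.recall, if_neg hA, if_neg hTem, if_pos hTsm]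
          have hmaxm : max Ts m = max Ts a := by omega
          have h' : max Ts m < min Te b := by omega
          obtain ⟨⟨rmem, rdisj, rcov, rthr⟩, ropt⟩ := ihr h'
          constructor
          · refine ⟨?_, rdisj, ?_, rthr⟩
            · intro I hI
              simp only [SegTree.intervals, Finset.mem_insert, Finset.mem_union]
              exact Or.inr (Or.inr (rmem I hI))
            · rw [rcov, hmaxm]
          · intro S hS
            obtain ⟨hmem, hdisj, hcov, hthr⟩ := hS
            have hSr : ∀ I ∈ S, I ∈ r.intervals := by
              intro I hI
              rcases hchild S ⟨hmem, hdisj, hcov, hthr⟩ I hI with h1 | h1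
              · exfalso
                obtain ⟨hb1, hb2, hb3⟩ := l.mem_intervals h1
                have hp := piece_pos hθ0 I hb2 (hthr I hI)
                omega
              · exact h1
            exact ropt S ⟨hSr, hdisj, by rw [hcov, hmaxm], hthr⟩
        · rw [SegTree.recall, if_neg hA, if_neg hTem, if_neg hTsm]
          push_neg at hTem hTsm
          have hl' : max Ts a < min Te m := by omega
          have hr' : max Ts m < min Te b := by omega
          have hminm : min Te m = m := by omega
          have hmaxm : max Ts m = m := by omega
          obtain ⟨⟨lmem, ldisj, lcov, lthr⟩, lopt⟩ := ihl hl'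
          obtain ⟨⟨rmem, rdisj, rcov, rthr⟩, ropt⟩ := ihr hr'
          set L := l.recall θ Ts Te with hL
          set R := r.recall θ Ts Te with hR
          -- pieces of L lie in [max Ts a, m), of R in [m, min Te b)
          have hpl : ∀ I ∈ L, Finset.Ico (max Ts I.1) (min Te I.2) ⊆
              Finset.Ico (max Ts a) m := by
            intro I hI
            rw [← hminm, ← lcov]
            exact Finset.subset_biUnion_of_mem (fun I => Finset.Ico (max Ts I.1) (min Te I.2)) hI
          have hpr : ∀ I ∈ R, Finset.Ico (max Ts I.1) (min Te I.2) ⊆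
              Finset.Ico m (min Te b) := by
            intro I hI
            rw [← hmaxm, ← rcov]
            exact Finset.subset_biUnion_of_mem (fun I => Finset.Ico (max Ts I.1) (min Te I.2)) hI
          have hIcoDisj : Disjoint (Finset.Ico (max Ts a) m) (Finset.Ico m (min Te b)) :=
            Finset.Ico_disjoint_Ico_consecutive _ _ _
          have hLR : Disjoint L R := by
            rw [Finset.disjoint_left]
            intro p hpL hpR
            obtain ⟨_, _, h2⟩ := l.mem_intervals (lmem p hpL)
            obtain ⟨h3, h4, _⟩ := r.mem_intervals (rmem p hpR)
            omega
          constructor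
          · refine ⟨?_, ?_, ?_, ?_⟩
            · intro I hI
              simp only [SegTree.intervals, Finset.mem_insert, Finset.mem_union]
              rcases Finset.mem_union.mp hI with h1 | h1
              · exact Or.inr (Or.inl (lmem I h1))
              · exact Or.inr (Or.inr (rmem I h1))
            · intro I hI J hJ hne
              rcases Finset.mem_union.mp hI with h1 | h1 <;>
                rcases Finset.mem_union.mp hJ with h2 | h2
              · exact ldisj I h1 J h2 hne
              · exact Finset.disjoint_of_subset_left (hpl I h1)
                  (Finset.disjoint_of_subset_right (hpr J h2) hIcoDisj)
              · exact Finset.disjoint_of_subset_left (hpr I h1)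
                  (Finset.disjoint_of_subset_right (hpl J h2) hIcoDisj.symm)
              · exact rdisj I h1 J h2 hne
            · have hbu : ((L ∪ R).biUnion fun I => Finset.Ico (max Ts I.1) (min Te I.2))
                  = (L.biUnion fun I => Finset.Ico (max Ts I.1) (min Te I.2))
                    ∪ (R.biUnion fun I => Finset.Ico (max Ts I.1) (min Te I.2)) := by
                ext x
                simp only [Finset.mem_biUnion, Finset.mem_union, or_and_right, exists_or]
              rw [hbu, lcov, rcov, hminm, hmaxm]
              exact Finset.Ico_union_Ico_eq_Ico (by omega) (by omega)
            · intro I hI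
              rcases Finset.mem_union.mp hI with h1 | h1
              · exact lthr I h1
              · exact rthr I h1
          · intro S hS
            have hch := hchild S hS
            obtain ⟨hmem, hdisj, hcov, hthr⟩ := hS
            set Sl := S.filter (fun p => p.2 ≤ m) with hSl
            set Sr := S.filter (fun p => ¬ p.2 ≤ m) with hSr
            have hSlmem : ∀ I ∈ Sl, I ∈ l.intervals := by
              intro I hI
              rw [hSl, Finset.mem_filter] at hI
              rcases hch I hI.1 with h1 | h1
              · exact h1
              · obtain ⟨h2, h3, _⟩ := r.mem_intervals h1
                omega
            have hSrmem : ∀ I ∈ Sr, I ∈ r.intervals := by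
              intro I hI
              rw [hSr, Finset.mem_filter] at hI
              rcases hch I hI.1 with h1 | h1
              · obtain ⟨_, _, h2⟩ := l.mem_intervals h1
                omega
              · exact h1
            have covl : (Sl.biUnion fun I => Finset.Ico (max Ts I.1) (min Te I.2))
                = Finset.Ico (max Ts a) (min Te m) := by
              apply Finset.Subset.antisymm
              · intro x hx
                obtain ⟨I, hI, hpx⟩ := Finset.mem_biUnion.mp hx
                obtain ⟨hb1, hb2, hb3⟩ := l.mem_intervals (hSlmem I hI)
                rw [Finset.mem_Ico] at hpx ⊢
                omega
              · intro x hx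
                rw [Finset.mem_Ico] at hx
                have hx' : x ∈ Finset.Ico (max Ts a) (min Te b) := by
                  rw [Finset.mem_Ico]; omega
                rw [← hcov] at hx'
                obtain ⟨I, hI, hpx⟩ := Finset.mem_biUnion.mp hx'
                rw [Finset.mem_Ico] at hpx
                have hIl : I ∈ Sl := by
                  rw [hSl, Finset.mem_filter]
                  refine ⟨hI, ?_⟩
                  by_contra hc
                  have : I ∈ Sr := by rw [hSr, Finset.mem_filter]; exact ⟨hI, hc⟩
                  obtain ⟨h2, h3, _⟩ := r.mem_intervals (hSrmem I this)
                  omega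
                exact Finset.mem_biUnion.mpr ⟨I, hIl, Finset.mem_Ico.mpr (by omega)⟩
            have covr : (Sr.biUnion fun I => Finset.Ico (max Ts I.1) (min Te I.2))
                = Finset.Ico (max Ts m) (min Te b) := by
              apply Finset.Subset.antisymm
              · intro x hx
                obtain ⟨I, hI, hpx⟩ := Finset.mem_biUnion.mp hx
                obtain ⟨hb1, hb2, hb3⟩ := r.mem_intervals (hSrmem I hI)
                rw [Finset.mem_Ico] at hpx ⊢
                omega
              · intro x hx
                rw [Finset.mem_Ico] at hx
                have hx' : x ∈ Finset.Ico (max Ts a) (min Te b) := by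
                  rw [Finset.mem_Ico]; omega
                rw [← hcov] at hx'
                obtain ⟨I, hI, hpx⟩ := Finset.mem_biUnion.mp hx'
                rw [Finset.mem_Ico] at hpx
                have hIr : I ∈ Sr := by
                  rw [hSr, Finset.mem_filter]
                  refine ⟨hI, ?_⟩
                  intro hc
                  have : I ∈ Sl := by rw [hSl, Finset.mem_filter]; exact ⟨hI, hc⟩
                  obtain ⟨_, _, h2⟩ := l.mem_intervals (hSlmem I this)
                  omega
                exact Finset.mem_biUnion.mpr ⟨I, hIr, Finset.mem_Ico.mpr (by omega)⟩
            have hcardl := lopt Sl ⟨hSlmem,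
              fun I hI J hJ hne => hdisj I (Finset.mem_of_mem_filter I hI) J
                (Finset.mem_of_mem_filter J hJ) hne, covl,
              fun I hI => hthr I (Finset.mem_of_mem_filter I hI)⟩
            have hcardr := ropt Sr ⟨hSrmem,
              fun I hI J hJ hne => hdisj I (Finset.mem_of_mem_filter I hI) J
                (Finset.mem_of_mem_filter J hJ) hne, covr,
              fun I hI => hthr I (Finset.mem_of_mem_filter I hI)⟩
            have hsplit : Sl.card + Sr.card = S.card :=
              Finset.card_filter_add_card_filter_not _
            rw [Finset.card_union_of_disjoint hLR]
            omega

theorem stmt_13 {a b : ℕ} (t : SegTree a b) (θ : ℝ) (hθ0 : 0 < θ) (hθ1 : θ < 1)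
    (Ts Te : ℕ) (hTs : a ≤ Ts) (hTsTe : Ts < Te) (hTe : Te ≤ b) :
    t.ValidHit θ Ts Te (t.recall θ Ts Te) ∧
    ∀ S : Finset (ℕ × ℕ), t.ValidHit θ Ts Te S →
      (t.recall θ Ts Te).card ≤ S.card := by
  have hm : max Ts a = Ts := by omega
  have hn : min Te b = Te := by omega
  have h : max Ts a < min Te b := by omega
  obtain ⟨hv, hopt⟩ := main_lemma hθ0 hθ1 Ts Te t h
  have key : ∀ S : Finset (ℕ × ℕ), t.CV θ Ts Te S ↔ t.ValidHit θ Ts Te S := by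
    intro S
    unfold SegTree.CV SegTree.ValidHit
    rw [hm, hn]
  exact ⟨(key _).mp hv, fun S hS => hopt S ((key S).mpr hS)⟩
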